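/- Let φ ∈ ℝ³ with φ ≠ 0 and set θ = ‖φ‖ (Euclidean norm). Then the series Γ₂(skew(φ)) = Σ_{n=0}^∞ (1/(n+2)!)·skew(φ)ⁿ converges and equals (1/2)·I₃ + ((θ − sin θ)/θ³)·skew(φ) + ((θ² + 2cos θ − 2)/(2θ⁴))·skew(φ)², where I₃ is the 3×3 identity matrix. -/

import Mathlib

/-!
Since `skew φ` has characteristic polynomial `X³ + θ²X`, it satisfies `skew(φ)³ = -θ² skew φ`.
Hence odd powers are `(-θ²)ᵏ skew φ` and even powers `(-θ²)ᵏ skew(φ)²`, and splitting the series by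
parity leaves the scalar series `Σ (-θ²)ᵏ/(2k+3)!` and `Σ (-θ²)ᵏ/(2k+4)!`: the tails of the sine and
cosine series, divided by `θ³` and `θ⁴`.
-/

open Matrix

/-- The skew-symmetric matrix of a vector `ω ∈ ℝ³`, so that `skew ω *ᵥ v = ω × v`. -/
def skew (ω : EuclideanSpace ℝ (Fin 3)) : Matrix (Fin 3) (Fin 3) ℝ :=
  !![0, -ω 2, ω 1; ω 2, 0, -ω 0; -ω 1, ω 0, 0]

section PowThree

variable {𝕜 R : Type*} [CommSemiring 𝕜] [Semiring R] [Algebra 𝕜 R] {A : R} {c : 𝕜}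

theorem pow_two_mul_add_one_of_pow_three_eq_smul (hA : A ^ 3 = c • A) (k : ℕ) :
    A ^ (2 * k + 1) = c ^ k • A := by
  induction k with
  | zero => simp
  | succ k ih =>
    rw [show 2 * (k + 1) + 1 = 2 * k + 1 + 2 by ring, pow_add, ih, smul_mul_assoc, ← pow_succ',
      hA, smul_smul, pow_succ]

theorem pow_two_mul_add_two_of_pow_three_eq_smul (hA : A ^ 3 = c • A) (k : ℕ) :
    A ^ (2 * k + 2) = c ^ k • A ^ 2 := by
  rw [pow_succ, pow_two_mul_add_one_of_pow_three_eq_smul hA, smul_mul_assoc, ← sq]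

variable [TopologicalSpace 𝕜] [TopologicalSpace R] [ContinuousAdd R] [ContinuousSMul 𝕜 R]

theorem hasSum_smul_pow_of_pow_three_eq_smul (hA : A ^ 3 = c • A) {a : ℕ → 𝕜} {s t : 𝕜}
    (hs : HasSum (fun k ↦ a (2 * k + 1) * c ^ k) s)
    (ht : HasSum (fun k ↦ a (2 * k + 2) * c ^ k) t) :
    HasSum (fun n ↦ a n • A ^ n) (a 0 • 1 + (s • A + t • A ^ 2)) := by
  have hodd : HasSum (fun k ↦ a (2 * k + 1) • A ^ (2 * k + 1)) (s • A) :=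
    (hs.smul_const A).congr_fun fun k ↦ by
      rw [pow_two_mul_add_one_of_pow_three_eq_smul hA, smul_smul]
  have heven : HasSum (fun k ↦ a (2 * k + 2) • A ^ (2 * k + 2)) (t • A ^ 2) :=
    (ht.smul_const (A ^ 2)).congr_fun fun k ↦ by
      rw [pow_two_mul_add_two_of_pow_three_eq_smul hA, smul_smul]
  have h := HasSum.zero_add (f := fun n ↦ a n • A ^ n) (hodd.even_add_odd heven)
  rwa [pow_zero] at h

end PowThree

theorem skew_pow_three (ω : EuclideanSpace ℝ (Fin 3)) : skew ω ^ 3 = (-‖ω‖ ^ 2) • skew ω := by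
  rw [EuclideanSpace.real_norm_sq_eq, Fin.sum_univ_three]
  ext i j
  fin_cases i <;> fin_cases j <;> simp [skew, pow_succ, Matrix.mul_apply, Fin.sum_univ_three] <;> ring

namespace Real

theorem hasSum_sub_sin_div_pow_three {x : ℝ} (hx : x ≠ 0) :
    HasSum (fun k : ℕ ↦ ((2 * k + 3).factorial : ℝ)⁻¹ * (-x ^ 2) ^ k) ((x - sin x) / x ^ 3) := by
  have htail := ((hasSum_nat_add_iff' 1).mpr (hasSum_sin x)).neg.div_const (x ^ 3)
  norm_num [Finset.sum_range_one] at htail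
  refine htail.congr_fun fun k ↦ ?_
  rw [show 2 * (k + 1) + 1 = 2 * k + 3 by ring, neg_pow, ← pow_mul]
  field_simp
  ring

theorem hasSum_cos_sub_div_pow_four {x : ℝ} (hx : x ≠ 0) :
    HasSum (fun k : ℕ ↦ ((2 * k + 4).factorial : ℝ)⁻¹ * (-x ^ 2) ^ k)
      ((x ^ 2 + 2 * cos x - 2) / (2 * x ^ 4)) := by
  have htail := ((hasSum_nat_add_iff' 2).mpr (hasSum_cos x)).div_const (x ^ 4)
  norm_num [Finset.sum_range_succ] at htail
  have hvalue : (cos x - (1 + -x ^ 2 / 2)) / x ^ 4 = (x ^ 2 + 2 * cos x - 2) / (2 * x ^ 4) := by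
    field_simp
    ring
  rw [hvalue] at htail
  refine htail.congr_fun fun k ↦ ?_
  rw [show 2 * (k + 2) = 2 * k + 4 by ring, neg_pow, ← pow_mul]
  field_simp
  ring

end Real

/-- The series `Γ₂(skew φ) = Σ_{n=0}^∞ skew(φ)ⁿ/(n+2)!` converges to
`(1/2)·I + ((θ − sin θ)/θ³)·skew φ + ((θ² + 2 cos θ − 2)/(2θ⁴))·skew(φ)²` with `θ = ‖φ‖`. -/
theorem gamma_two_skew (φ : EuclideanSpace ℝ (Fin 3)) (hφ : φ ≠ 0) :
    HasSum (fun n : ℕ => (((n + 2).factorial : ℝ))⁻¹ • skew φ ^ n)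
      ((1 / 2 : ℝ) • (1 : Matrix (Fin 3) (Fin 3) ℝ)
        + ((‖φ‖ - Real.sin ‖φ‖) / ‖φ‖ ^ 3) • skew φ
        + ((‖φ‖ ^ 2 + 2 * Real.cos ‖φ‖ - 2) / (2 * ‖φ‖ ^ 4)) • (skew φ * skew φ)) := by
  have hθ : ‖φ‖ ≠ 0 := norm_ne_zero_iff.mpr hφ
  have h := hasSum_smul_pow_of_pow_three_eq_smul (a := fun n ↦ ((n + 2).factorial : ℝ)⁻¹)
    (skew_pow_three φ) (Real.hasSum_sub_sin_div_pow_three hθ) (Real.hasSum_cos_sub_div_pow_four hθ)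
  have hhalf : ((0 + 2).factorial : ℝ)⁻¹ = 1 / 2 := by norm_num [Nat.factorial]
  rwa [add_assoc, ← sq, ← hhalf]
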